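/- Let M be a quasi-projective right R-module, E = End(M), s ∈ E, π : M → M/s(M) the canonical epimorphism and φ : E → E/sE the canonical epimorphism. Then for every g ∈ E, the restriction π|_{g(M)} : g(M) → M/s(M) is surjective if and only if φ|_{gE} : gE → E/sE is surjective. -/

import Mathlib

open Submodule LinearMap Function

/-- `M` is quasi-projective: for every epimorphism `f : M → L` and homomorphism
`h : M → L` there is `k : M → M` with `f ∘ k = h`. -/
def QuasiProjective (S : Type u) [Ring S] (M : Type v) [AddCommGroup M]
    [Module S M] : Prop :=
  ∀ (L : Type v) [AddCommGroup L] [Module S L] (f : M →ₗ[S] L),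
    Function.Surjective f → ∀ h : M →ₗ[S] L, ∃ k : M →ₗ[S] M, f ∘ₗ k = h

/-!
Both restrictions are surjective iff `g * k = 1 + s * t` for some `k, t ∈ E`. For `gE → E/sE`
this is read off a preimage of the class of `1`. For `g(M) → M/s(M)`, quasi-projectivity lifts
`π` along the epimorphism `π ∘ g` to some `k` with `g ∘ k - 1` landing in `s(M)`, and then lifts
`g ∘ k - 1` along the epimorphism `M → s(M)` to some `t` with `s ∘ t = g ∘ k - 1`.
-/

theorem Submodule.mem_span_op_singleton {A : Type*} [Ring A] {a x : A} :
    x ∈ span Aᵐᵒᵖ {a} ↔ ∃ t, a * t = x := by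
  rw [mem_span_singleton]
  exact ⟨fun ⟨t, ht⟩ => ⟨t.unop, ht⟩, fun ⟨t, ht⟩ => ⟨MulOpposite.op t, ht⟩⟩

theorem surjective_mkQ_span_op_singleton_mul_iff {A : Type*} [Ring A] (a b : A) :
    Surjective (fun x : A => (span Aᵐᵒᵖ {a}).mkQ (b * x)) ↔ ∃ k t, b * k = 1 + a * t := by
  constructor
  · intro hsurj
    obtain ⟨k, hk⟩ := hsurj ((span Aᵐᵒᵖ {a}).mkQ 1)
    obtain ⟨t, ht⟩ := mem_span_op_singleton.mp ((Submodule.Quotient.eq _).mp hk)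
    exact ⟨k, t, by rw [ht, add_sub_cancel]⟩
  · rintro ⟨k, t, hkt⟩ q
    obtain ⟨y, rfl⟩ := (span Aᵐᵒᵖ {a}).mkQ_surjective q
    refine ⟨k * y, (Submodule.Quotient.eq _).mpr (mem_span_op_singleton.mpr ⟨t * y, ?_⟩)⟩
    rw [← mul_assoc, ← mul_assoc, hkt, add_mul, one_mul, add_sub_cancel_left]

theorem surjective_mkQ_range_of_mul_eq_one_add_mul {S M : Type*} [Ring S] [AddCommGroup M]
    [Module S M] {s g k t : Module.End S M} (hkt : g * k = 1 + s * t) :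
    Surjective (fun m => (range s).mkQ (g m)) := by
  intro q
  obtain ⟨m, rfl⟩ := (range s).mkQ_surjective q
  refine ⟨k m, (Submodule.Quotient.eq _).mpr ⟨t m, ?_⟩⟩
  rw [← Module.End.mul_apply g, hkt]
  simp

namespace QuasiProjective

variable {S : Type u} [Ring S] {M : Type v} [AddCommGroup M] [Module S M]

theorem exists_comp_eq_of_range_le (hqp : QuasiProjective S M) {N : Type v} [AddCommGroup N]
    [Module S N] {f h : M →ₗ[S] N} (hle : range h ≤ range f) : ∃ k : Module.End S M, f ∘ₗ k = h := by
  obtain ⟨k, hk⟩ := hqp (range f) f.rangeRestrict f.surjective_rangeRestrict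
    (h.codRestrict (range f) fun m => hle (mem_range_self h m))
  exact ⟨k, LinearMap.ext fun m => congrArg Subtype.val (LinearMap.congr_fun hk m)⟩

theorem exists_mul_eq_one_add_mul (hqp : QuasiProjective S M) {s g : Module.End S M}
    (hsurj : Surjective (fun m => (range s).mkQ (g m))) : ∃ k t, g * k = 1 + s * t := by
  obtain ⟨k, hk⟩ := hqp _ ((range s).mkQ ∘ₗ g) hsurj (range s).mkQ
  have hle : range (g * k - 1) ≤ range s := by
    rintro _ ⟨m, rfl⟩
    rw [← Quotient.mk_eq_zero, LinearMap.sub_apply, Quotient.mk_sub]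
    exact sub_eq_zero.mpr (LinearMap.congr_fun hk m)
  obtain ⟨t, ht⟩ := hqp.exists_comp_eq_of_range_le hle
  exact ⟨k, t, eq_add_of_sub_eq' ht.symm⟩

end QuasiProjective

theorem stmt_17 {R : Type*} [Ring R]
    {M : Type v} [AddCommGroup M] [Module Rᵐᵒᵖ M]
    (hqp : QuasiProjective Rᵐᵒᵖ M)
    (s g : Module.End Rᵐᵒᵖ M) :
    Function.Surjective
      (fun m : M => (LinearMap.range (s : M →ₗ[Rᵐᵒᵖ] M)).mkQ (g m)) ↔
    Function.Surjective
      (fun x : Module.End Rᵐᵒᵖ M =>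
        (Submodule.span (Module.End Rᵐᵒᵖ M)ᵐᵒᵖ {s}).mkQ (g * x)) := by
  rw [surjective_mkQ_span_op_singleton_mul_iff]
  exact ⟨hqp.exists_mul_eq_one_add_mul,
    fun ⟨_, _, hkt⟩ => surjective_mkQ_range_of_mul_eq_one_add_mul hkt⟩
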